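/- Let 0 < p < ∞ and -n/p ≤ λ < 0. Set 1/p̃ = 1 + 1/p and λ̃ = λ - n. Then for f in the Morrey space M^{p,λ}(ℝⁿ) and g ∈ L¹(ℝⁿ), the product fg belongs to M^{p̃,λ̃}(ℝⁿ) and ‖fg‖_{M^{p̃,λ̃}} ≲ ‖f‖_{M^{p,λ}} ‖g‖_{L¹}. -/

import Mathlib

/-!
On each cube `Q`, Hölder's inequality with `1/p̃ = 1/p + 1/1` gives
`‖fg‖_{L^p̃(Q)} ≤ ‖f‖_{L^p(Q)} ‖g‖_{L^1(Q)}`, and the powers of `|Q|` in the two Morrey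
quantities agree because `-λ̃/n - 1/p̃ = -λ/n - 1/p`. Bounding `‖g‖_{L^1(Q)}` by `‖g‖_{L^1}`
and taking the supremum over cubes gives the estimate with constant `1`.
-/

open MeasureTheory
open scoped ENNReal NNReal

/-- A cube in `ℝⁿ` with sides parallel to the axes, lower corner `a`, side length `r`. -/
def cube (n : ℕ) (a : EuclideanSpace ℝ (Fin n)) (r : ℝ) : Set (EuclideanSpace ℝ (Fin n)) :=
  {x | ∀ i, a i ≤ x i ∧ x i ≤ a i + r}

/-- The Morrey norm `‖f‖_{M^{p,λ}} = sup_Q |Q|^{-λ/n} (|Q|^{-1} ∫_Q |f|^p)^{1/p}`. -/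
noncomputable def morreyNorm (n : ℕ) (p lam : ℝ) (f : EuclideanSpace ℝ (Fin n) → ℝ) : ℝ≥0∞ :=
  ⨆ (a : EuclideanSpace ℝ (Fin n)) (r : ℝ) (_ : 0 < r),
    volume (cube n a r) ^ (-(lam / n)) *
      ((volume (cube n a r))⁻¹ * ∫⁻ x in cube n a r, ENNReal.ofReal |f x| ^ p) ^ (1 / p)

lemma volume_cube {n : ℕ} (a : EuclideanSpace ℝ (Fin n)) (r : ℝ) :
    volume (cube n a r) = ENNReal.ofReal r ^ n := by
  have h : cube n a r = (MeasurableEquiv.toLp 2 (Fin n → ℝ)).symm ⁻¹'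
      Set.univ.pi fun i => Set.Icc (a i) (a i + r) := by
    ext x
    simp only [cube, Set.mem_preimage, Set.mem_pi, Set.mem_univ, true_implies, Set.mem_Icc]
    rfl
  rw [h, (EuclideanSpace.volume_preserving_symm_measurableEquiv_toLp (Fin n)).measure_preimage
      (MeasurableSet.univ_pi fun i => measurableSet_Icc).nullMeasurableSet, volume_pi_pi]
  simp [Real.volume_Icc]

lemma volume_cube_ne_zero {n : ℕ} (a : EuclideanSpace ℝ (Fin n)) {r : ℝ} (hr : 0 < r) :
    volume (cube n a r) ≠ 0 := by
  rw [volume_cube]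
  exact pow_ne_zero _ (ENNReal.ofReal_pos.mpr hr).ne'

lemma volume_cube_ne_top {n : ℕ} (a : EuclideanSpace ℝ (Fin n)) (r : ℝ) :
    volume (cube n a r) ≠ ∞ := by
  rw [volume_cube]
  exact ENNReal.pow_ne_top ENNReal.ofReal_ne_top

lemma le_morreyNorm {n : ℕ} {p lam : ℝ} (f : EuclideanSpace ℝ (Fin n) → ℝ)
    (a : EuclideanSpace ℝ (Fin n)) {r : ℝ} (hr : 0 < r) :
    volume (cube n a r) ^ (-(lam / n)) *
      ((volume (cube n a r))⁻¹ * ∫⁻ x in cube n a r, ENNReal.ofReal |f x| ^ p) ^ (1 / p) ≤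
      morreyNorm n p lam f :=
  le_iSup_of_le a <| le_iSup_of_le r <| le_iSup_of_le hr le_rfl

lemma morreyNorm_le {n : ℕ} {p lam : ℝ} {f : EuclideanSpace ℝ (Fin n) → ℝ} {C : ℝ≥0∞}
    (h : ∀ a r, 0 < r → volume (cube n a r) ^ (-(lam / n)) *
      ((volume (cube n a r))⁻¹ * ∫⁻ x in cube n a r, ENNReal.ofReal |f x| ^ p) ^ (1 / p) ≤ C) :
    morreyNorm n p lam f ≤ C :=
  iSup_le fun a => iSup_le fun r => iSup_le (h a r)

lemma lintegral_abs_mul_rpow_le {α : Type*} [MeasurableSpace α] (μ : Measure α) {f g : α → ℝ}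
    (hf : AEMeasurable f μ) (hg : AEMeasurable g μ) {p pt : ℝ} (hp : 0 < p)
    (hpt : 1 / pt = 1 + 1 / p) :
    (∫⁻ x, ENNReal.ofReal |f x * g x| ^ pt ∂μ) ^ (1 / pt) ≤
      (∫⁻ x, ENNReal.ofReal |f x| ^ p ∂μ) ^ (1 / p) * ∫⁻ x, ENNReal.ofReal |g x| ∂μ := by
  have hpt_pos : 0 < pt := one_div_pos.mp (by rw [hpt]; positivity)
  have hpt_lt : pt < p := by
    rw [← one_div_lt_one_div hp hpt_pos, hpt]
    linarith
  have h := ENNReal.lintegral_Lp_mul_le_Lq_mul_Lr (r := 1) hpt_pos hpt_lt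
    (by rw [hpt, add_comm, div_one]) μ hf.abs.ennreal_ofReal hg.abs.ennreal_ofReal
  simpa only [Pi.mul_apply, ← ENNReal.ofReal_mul (abs_nonneg _), ← abs_mul, ENNReal.rpow_one,
    div_one] using h

lemma rpow_add_one_mul_inv_mul_rpow_le {v I A B : ℝ≥0∞} (hv₀ : v ≠ 0) (hv : v ≠ ∞)
    {p pt : ℝ} (hp : 0 < p) (hpt : 1 / pt = 1 + 1 / p) (s : ℝ)
    (hI : I ^ (1 / pt) ≤ A ^ (1 / p) * B) :
    v ^ (s + 1) * (v⁻¹ * I) ^ (1 / pt) ≤ v ^ s * (v⁻¹ * A) ^ (1 / p) * B := by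
  have hpt_nonneg : 0 ≤ 1 / pt := by rw [hpt]; positivity
  have inv_mul_rpow : ∀ (X : ℝ≥0∞) {q : ℝ}, 0 ≤ q → (v⁻¹ * X) ^ q = v ^ (-q) * X ^ q := by
    intro X q hq
    rw [ENNReal.mul_rpow_of_nonneg _ _ hq, ENNReal.inv_rpow, ENNReal.rpow_neg]
  calc v ^ (s + 1) * (v⁻¹ * I) ^ (1 / pt) = v ^ s * v ^ (-(1 / p)) * I ^ (1 / pt) := by
        rw [inv_mul_rpow _ hpt_nonneg, ← mul_assoc, ← ENNReal.rpow_add _ _ hv₀ hv,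
          ← ENNReal.rpow_add _ _ hv₀ hv, hpt]
        ring_nf
    _ ≤ v ^ s * v ^ (-(1 / p)) * (A ^ (1 / p) * B) := by gcongr
    _ = v ^ s * (v⁻¹ * A) ^ (1 / p) * B := by
        rw [inv_mul_rpow _ (by positivity)]
        ring

lemma morreyNorm_mul_le {n : ℕ} (hn : n ≠ 0) {p lam pt : ℝ} (hp : 0 < p)
    (hpt : 1 / pt = 1 + 1 / p)
    {f g : EuclideanSpace ℝ (Fin n) → ℝ} (hf : Measurable f) (hg : Measurable g) :
    morreyNorm n pt (lam - n) (fun x => f x * g x) ≤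
      morreyNorm n p lam f * ∫⁻ x, ENNReal.ofReal |g x| := by
  refine morreyNorm_le fun a r hr => ?_
  have hexp : -((lam - n) / n) = -(lam / n) + 1 := by field_simp; ring
  rw [hexp]
  calc _ ≤ volume (cube n a r) ^ (-(lam / n)) * ((volume (cube n a r))⁻¹ *
          ∫⁻ x in cube n a r, ENNReal.ofReal |f x| ^ p) ^ (1 / p) *
          ∫⁻ x in cube n a r, ENNReal.ofReal |g x| :=
        rpow_add_one_mul_inv_mul_rpow_le (volume_cube_ne_zero a hr) (volume_cube_ne_top a r)
          hp hpt _ (lintegral_abs_mul_rpow_le _ hf.aemeasurable hg.aemeasurable hp hpt)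
    _ ≤ _ := by
        gcongr
        · exact le_morreyNorm f a hr
        · exact Measure.restrict_le_self

theorem stmt_7_general {n : ℕ} (hn : 0 < n) (p lam pt : ℝ) (hp : 0 < p)
    (hpt : 1 / pt = 1 + 1 / p) :
    ∃ C : ℝ≥0∞, 0 < C ∧ C < ∞ ∧
      ∀ f g : EuclideanSpace ℝ (Fin n) → ℝ, Measurable f → Measurable g →
        morreyNorm n p lam f ≠ ∞ → (∫⁻ x, ENNReal.ofReal |g x|) ≠ ∞ →
        morreyNorm n pt (lam - n) (fun x => f x * g x) ≠ ∞ ∧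
        morreyNorm n pt (lam - n) (fun x => f x * g x) ≤
          C * morreyNorm n p lam f * ∫⁻ x, ENNReal.ofReal |g x| := by
  refine ⟨1, one_pos, ENNReal.one_lt_top, fun f g hf hg hf_fin hg_fin => ?_⟩
  have h := morreyNorm_mul_le hn.ne' (lam := lam) hp hpt hf hg
  exact ⟨ne_top_of_le_ne_top (ENNReal.mul_ne_top hf_fin hg_fin) h, by rwa [one_mul]⟩

/-- Let `0 < p < ∞`, `-n/p ≤ λ < 0`, `1/p̃ = 1 + 1/p`, `λ̃ = λ - n`.  For
`f ∈ M^{p,λ}(ℝⁿ)` and `g ∈ L¹(ℝⁿ)`, the product `fg` belongs to `M^{p̃,λ̃}(ℝⁿ)` and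
`‖fg‖_{M^{p̃,λ̃}} ≲ ‖f‖_{M^{p,λ}} ‖g‖_{L¹}`. -/
theorem stmt_7 {n : ℕ} (hn : 0 < n) (p lam pt : ℝ) (hp : 0 < p)
    (hlam₁ : -(n / p) ≤ lam) (hlam₂ : lam < 0) (hpt : 1 / pt = 1 + 1 / p) :
    ∃ C : ℝ≥0∞, 0 < C ∧ C < ∞ ∧
      ∀ f g : EuclideanSpace ℝ (Fin n) → ℝ, Measurable f → Measurable g →
        morreyNorm n p lam f ≠ ∞ → (∫⁻ x, ENNReal.ofReal |g x|) ≠ ∞ →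
        morreyNorm n pt (lam - n) (fun x => f x * g x) ≠ ∞ ∧
        morreyNorm n pt (lam - n) (fun x => f x * g x) ≤
          C * morreyNorm n p lam f * ∫⁻ x, ENNReal.ofReal |g x| :=
  stmt_7_general hn p lam pt hp hpt
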